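/- arXiv:2008.06170 — 2 statements merged into one kernel-verified Lean document; each statement's English description precedes it below -/
import Mathlib

section
/- Let N be a natural number and define Enc(x, r) = (1 + N)^x · r^N in ZMod (N^2) for a plaintext x : ℕ and randomness r : ZMod (N^2). Then for all plaintexts x₁, x₂ : ℕ and randomness r₁, r₂ : ZMod (N^2), Enc(x₁, r₁) · Enc(x₂, r₂) = Enc((x₁ + x₂) mod N, r₁ · r₂). (Homomorphic addition, Eqn (1) of the paper.) -/
/-- Paillier-style encryption of plaintext `x` with randomness `r`, in `ZMod (N^2)`. -/
def Enc (N : ℕ) (x : ℕ) (r : ZMod (N ^ 2)) : ZMod (N ^ 2) :=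
  ((1 : ZMod (N ^ 2)) + (N : ZMod (N ^ 2))) ^ x * r ^ N

lemma one_add_pow_of_sq_zero {R : Type*} [CommRing R] (t : R) (ht : t ^ 2 = 0) (n : ℕ) :
    (1 + t) ^ n = 1 + n * t := by
  induction n with
  | zero => simp
  | succ k ih =>
    rw [pow_succ, ih]
    push_cast
    ring_nf
    rw [ht]
    ring

lemma one_add_N_pow_N (N : ℕ) : ((1 : ZMod (N ^ 2)) + N) ^ N = 1 := by
  have ht : ((N : ZMod (N ^ 2))) ^ 2 = 0 := by
    rw [← Nat.cast_pow, ZMod.natCast_self]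
  rw [one_add_pow_of_sq_zero _ ht, ← Nat.cast_mul, ← sq, ZMod.natCast_self, add_zero]

theorem paillier_homomorphic_addition (N : ℕ) (x₁ x₂ : ℕ) (r₁ r₂ : ZMod (N ^ 2)) :
    Enc N x₁ r₁ * Enc N x₂ r₂ = Enc N ((x₁ + x₂) % N) (r₁ * r₂) := by
  unfold Enc
  have h : ((1 : ZMod (N ^ 2)) + N) ^ (x₁ + x₂) = (1 + (N : ZMod (N^2))) ^ ((x₁ + x₂) % N) := by
    conv_lhs => rw [← Nat.mod_add_div (x₁ + x₂) N, pow_add, pow_mul, one_add_N_pow_N, one_pow, mul_one]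
  rw [mul_pow, ← h, pow_add]
  ring
end

section
/- Let N be a natural number and define Enc(x, r) = (1 + N)^x · r^N in ZMod (N^2) for a plaintext x : ℕ and randomness r : ZMod (N^2). Then for all x₁, x₂ : ℕ and all r : ZMod (N^2), Enc(x₂, r)^{x₁} = Enc((x₁ · x₂) mod N, r^{x₁}). (Homomorphic plaintext–ciphertext multiplication, Eqn (2) of the paper.) -/
lemma one_add_pow {R : Type*} [CommRing R] (t : R) (h : t ^ 2 = 0) (n : ℕ) :
    (1 + t) ^ n = 1 + n * t := by
  induction n with
  | zero => simp
  | succ k ih =>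
    rw [pow_succ, ih]
    push_cast
    ring_nf
    rw [h]
    ring

lemma base_pow_N (N : ℕ) : ((1 : ZMod (N ^ 2)) + (N : ZMod (N ^ 2))) ^ N = 1 := by
  have h : ((N : ZMod (N ^ 2))) ^ 2 = 0 := by
    rw [← Nat.cast_pow]
    exact ZMod.natCast_self _
  rw [one_add_pow _ h]
  have h2 : (N : ZMod (N ^ 2)) * (N : ZMod (N ^ 2)) = 0 := by rw [← pow_two]; exact h
  rw [h2, add_zero]

lemma base_pow_mod (N : ℕ) (x : ℕ) :
    ((1 : ZMod (N ^ 2)) + (N : ZMod (N ^ 2))) ^ x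
      = ((1 : ZMod (N ^ 2)) + (N : ZMod (N ^ 2))) ^ (x % N) := by
  conv_lhs => rw [← Nat.mod_add_div x N]
  rw [pow_add, pow_mul, base_pow_N, one_pow, mul_one]

theorem paillier_homomorphic_multiplication (N : ℕ) (x₁ x₂ : ℕ) (r : ZMod (N ^ 2)) :
    Enc N x₂ r ^ x₁ = Enc N ((x₁ * x₂) % N) (r ^ x₁) := by
  unfold Enc
  rw [mul_pow, ← pow_mul, ← pow_mul, mul_comm x₂ x₁, base_pow_mod N (x₁ * x₂),
    mul_comm N x₁, pow_mul]
end
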